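/- arXiv:1811.01383 — 2 statements merged into one kernel-verified Lean document; each statement's English description precedes it below -/
import Mathlib

section
/- For every P × L matrix A with integer entries there exists a P × P integer matrix U which is invertible over the integers (unimodular) such that the matrix H = U·A is upper triangular, i.e. H(i,j) = 0 whenever j < i. -/
/-!
Over a Bézout domain, from a gcd relation `a x + b y = g` with `x = g x'`, `y = g y'` one gets
the matrix `[[a, b], [-y', x']]` of determinant `1` sending `(x, y)` to `(g, 0)`. Applying such
operations to pairs of rows kills a column below a chosen pivot row. Columns are cleared from
left to right, column `n` using only the rows `≥ n`: on these rows the earlier columns already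
vanish, so they stay untouched.
-/

open Matrix

theorem IsBezout.exists_det_eq_one_and_mul_add_mul_eq_zero {R : Type*} [CommRing R] [IsDomain R]
    [IsBezout R] (x y : R) : ∃ a b c d : R, a * d - b * c = 1 ∧ c * x + d * y = 0 := by
  obtain ⟨x', hx⟩ := gcd_dvd_left x y
  obtain ⟨y', hy⟩ := gcd_dvd_right x y
  obtain ⟨a, b, hab⟩ := gcd_eq_sum x y
  generalize gcd x y = g at hx hy hab
  by_cases hg : g = 0
  · exact ⟨1, 0, 0, 1, by ring, by linear_combination hy + y' * hg⟩
  · refine ⟨a, b, -y', x', mul_left_cancel₀ hg ?_, by linear_combination x' * hy - y' * hx⟩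
    linear_combination hab - a * hx - b * hy

namespace Matrix

variable {ι R : Type*} [DecidableEq ι] [CommRing R]

def twoRowOp (i j : ι) (a b c d : R) : Matrix ι ι R :=
  ((1 : Matrix ι ι R).updateRow i (Pi.single i a + Pi.single j b)).updateRow j
    (Pi.single i c + Pi.single j d)

def IsOneOutside (S : Set ι) (U : Matrix ι ι R) : Prop :=
  ∀ k l, (k ∉ S ∨ l ∉ S) → U k l = (1 : Matrix ι ι R) k l

theorem IsOneOutside.one {S : Set ι} : IsOneOutside S (1 : Matrix ι ι R) := fun _ _ _ => rfl

theorem isOneOutside_twoRowOp {S : Set ι} {i j : ι} (hi : i ∈ S) (hj : j ∈ S) (a b c d : R) :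
    IsOneOutside S (twoRowOp i j a b c d) := by
  rintro k l (hk | hl)
  · have hki : k ≠ i := fun h => hk (h ▸ hi)
    have hkj : k ≠ j := fun h => hk (h ▸ hj)
    simp [twoRowOp, updateRow_ne hki, updateRow_ne hkj]
  · have hli : l ≠ i := fun h => hl (h ▸ hi)
    have hlj : l ≠ j := fun h => hl (h ▸ hj)
    simp only [twoRowOp, updateRow_apply, one_apply, Pi.add_apply, Pi.single_apply, hli, hlj]
    split_ifs <;> simp_all

variable [Fintype ι]

namespace IsOneOutside

variable {S : Set ι} {U V : Matrix ι ι R}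

theorem mul (hU : IsOneOutside S U) (hV : IsOneOutside S V) : IsOneOutside S (U * V) := by
  rintro k l (hk | hl)
  · have hUk : U k = (1 : Matrix ι ι R) k := funext fun m => hU k m (.inl hk)
    rw [mul_apply', hUk, ← mul_apply', Matrix.one_mul, hV k l (.inl hk)]
  · have hVl : (fun m => V m l) = fun m => (1 : Matrix ι ι R) m l :=
      funext fun m => hV m l (.inr hl)
    rw [mul_apply', hVl, ← mul_apply', Matrix.mul_one, hU k l (.inr hl)]

theorem mulVec_eq_self (hU : IsOneOutside S U) {v : ι → R} (hv : ∀ k ∈ S, v k = 0) :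
    U *ᵥ v = v := by
  ext k
  rw [mulVec, dotProduct, Finset.sum_eq_single k]
  · by_cases hk : k ∈ S
    · simp [hv k hk]
    · simp [hU k k (.inl hk)]
  · intro m _ hmk
    by_cases hm : m ∈ S
    · simp [hv m hm]
    · simp [hU k m (.inr hm), Ne.symm hmk]
  · simp

end IsOneOutside

section twoRowOp

variable {i j : ι} {a b c d : R} (v : ι → R)

theorem twoRowOp_mulVec_left (hij : i ≠ j) :
    (twoRowOp i j a b c d *ᵥ v) i = a * v i + b * v j := by
  simp [twoRowOp, updateRow_mulVec, hij, add_dotProduct]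

theorem twoRowOp_mulVec_right : (twoRowOp i j a b c d *ᵥ v) j = c * v i + d * v j := by
  simp [twoRowOp, updateRow_mulVec, add_dotProduct]

theorem twoRowOp_mulVec_of_ne {k : ι} (hki : k ≠ i) (hkj : k ≠ j) :
    (twoRowOp i j a b c d *ᵥ v) k = v k := by
  simp [twoRowOp, updateRow_mulVec, hki, hkj]

end twoRowOp

theorem twoRowOp_mul_twoRowOp {i j : ι} (hij : i ≠ j) {a b c d : R} (h : a * d - b * c = 1) :
    twoRowOp i j a b c d * twoRowOp i j d (-b) (-c) a = 1 := by
  refine ext_iff_mulVec.2 fun v => funext fun k => ?_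
  rw [← mulVec_mulVec, one_mulVec]
  by_cases hki : k = i
  · subst hki
    simp only [twoRowOp_mulVec_left _ hij, twoRowOp_mulVec_right]
    linear_combination v k * h
  by_cases hkj : k = j
  · subst hkj
    simp only [twoRowOp_mulVec_left _ hij, twoRowOp_mulVec_right]
    linear_combination v k * h
  · simp only [twoRowOp_mulVec_of_ne _ hki hkj]

theorem isUnit_twoRowOp {i j : ι} (hij : i ≠ j) {a b c d : R} (h : a * d - b * c = 1) :
    IsUnit (twoRowOp i j a b c d) :=
  IsUnit.of_mul_eq_one _ (twoRowOp_mul_twoRowOp hij h)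

section ColumnClearing

variable [IsDomain R] [IsBezout R]

theorem exists_isUnit_isOneOutside_mulVec_eq_zero {S : Set ι} {i₀ : ι} (hi₀ : i₀ ∈ S)
    (v : ι → R) : ∃ U : Matrix ι ι R,
      IsUnit U ∧ IsOneOutside S U ∧ ∀ k ∈ S, k ≠ i₀ → (U *ᵥ v) k = 0 := by
  -- Induction on the rows `T` where `v` may still be nonzero; each step clears one of them
  -- against the pivot row `i₀`.
  suffices ∀ (T : Finset ι) (v : ι → R), (∀ k ∈ S, k ≠ i₀ → k ∉ T → v k = 0) →
      ∃ U : Matrix ι ι R, IsUnit U ∧ IsOneOutside S U ∧ ∀ k ∈ S, k ≠ i₀ → (U *ᵥ v) k = 0 from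
    this Finset.univ v fun k _ _ hk => absurd (Finset.mem_univ k) hk
  intro T
  induction T using Finset.induction_on with
  | empty =>
    exact fun v hv => ⟨1, isUnit_one, .one, fun k hk hk₀ => by
      simpa using hv k hk hk₀ (Finset.notMem_empty k)⟩
  | insert k T _ ih =>
    intro v hv
    by_cases hk : k ∈ S ∧ k ≠ i₀
    · obtain ⟨a, b, c, d, hdet, hvk⟩ :=
        IsBezout.exists_det_eq_one_and_mul_add_mul_eq_zero (v i₀) (v k)
      have hMv : ∀ m ∈ S, m ≠ i₀ → m ∉ T → (twoRowOp i₀ k a b c d *ᵥ v) m = 0 := by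
        intro m hm hm₀ hmT
        by_cases hmk : m = k
        · rw [hmk, twoRowOp_mulVec_right, hvk]
        · rw [twoRowOp_mulVec_of_ne _ hm₀ hmk]
          exact hv m hm hm₀ (by simp [hmk, hmT])
      obtain ⟨U, hU, hUS, hUv⟩ := ih _ hMv
      refine ⟨U * twoRowOp i₀ k a b c d, hU.mul (isUnit_twoRowOp (Ne.symm hk.2) hdet),
        hUS.mul (isOneOutside_twoRowOp hi₀ hk.1 a b c d), fun m hm hm₀ => ?_⟩
      rw [← mulVec_mulVec]
      exact hUv m hm hm₀
    · refine ih v fun m hm hm₀ hmT => hv m hm hm₀ ?_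
      rw [Finset.mem_insert]
      rintro (rfl | h)
      exacts [hk ⟨hm, hm₀⟩, hmT h]

end ColumnClearing

section Triangular

variable {P L : ℕ}

def IsUpperTriangularUpTo (n : ℕ) (B : Matrix (Fin P) (Fin L) R) : Prop :=
  ∀ (i : Fin P) (j : Fin L), (j : ℕ) < n → (j : ℕ) < i → B i j = 0

variable [IsDomain R] [IsBezout R]

theorem IsUpperTriangularUpTo.exists_isUnit_mul_succ {B : Matrix (Fin P) (Fin L) R} {n : ℕ}
    (hB : B.IsUpperTriangularUpTo n) (hn : n < L) :
    ∃ V : Matrix (Fin P) (Fin P) R, IsUnit V ∧ (V * B).IsUpperTriangularUpTo (n + 1) := by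
  by_cases hnP : n < P
  · obtain ⟨V, hV, hVS, hVn⟩ := exists_isUnit_isOneOutside_mulVec_eq_zero
      (S := {i : Fin P | n ≤ i}) (i₀ := ⟨n, hnP⟩) (le_refl n) (fun k => B k ⟨n, hn⟩)
    refine ⟨V, hV, fun i j hjn hji => ?_⟩
    rcases (Nat.lt_succ_iff.1 hjn).lt_or_eq with hjn | hjn
    · have hVj := hVS.mulVec_eq_self (v := fun k => B k j) fun k hk =>
        hB k j hjn (hjn.trans_le hk)
      exact (congrFun hVj i).trans (hB i j hjn hji)
    · obtain rfl : j = ⟨n, hn⟩ := Fin.ext hjn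
      exact hVn i hji.le (Fin.ne_of_val_ne hji.ne')
  · refine ⟨1, isUnit_one, fun i j hjn hji => ?_⟩
    rw [Matrix.one_mul]
    exact hB i j (by have := i.isLt; omega) hji

theorem exists_isUnit_isUpperTriangularUpTo_mul (A : Matrix (Fin P) (Fin L) R) {n : ℕ}
    (hn : n ≤ L) :
    ∃ U : Matrix (Fin P) (Fin P) R, IsUnit U ∧ (U * A).IsUpperTriangularUpTo n := by
  induction n with
  | zero => exact ⟨1, isUnit_one, fun _ _ h => absurd h (Nat.not_lt_zero _)⟩
  | succ n ih =>
    obtain ⟨U, hU, hUA⟩ := ih (n.le_succ.trans hn)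
    obtain ⟨V, hV, hVUA⟩ := hUA.exists_isUnit_mul_succ hn
    exact ⟨V * U, hV.mul hU, by rwa [Matrix.mul_assoc]⟩

end Triangular

end Matrix

/-- For every `P × L` integer matrix `A` there exists a unimodular `P × P`
integer matrix `U` (invertible over `ℤ`) such that `H = U * A` is upper
triangular, i.e. `H i j = 0` whenever `j < i`. -/
theorem hermite_normal_form_exists (P L : ℕ) (A : Matrix (Fin P) (Fin L) ℤ) :
    ∃ U : Matrix (Fin P) (Fin P) ℤ, IsUnit U ∧
      ∀ (i : Fin P) (j : Fin L), (j : ℕ) < (i : ℕ) → (U * A) i j = 0 := by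
  obtain ⟨U, hU, hUA⟩ := A.exists_isUnit_isUpperTriangularUpTo_mul le_rfl
  exact ⟨U, hU, fun i j => hUA i j j.isLt⟩
end

section
/- Let R be a real upper triangular N × N matrix with R_{N,N} > 0, let z ∈ ℝ^N, d ≥ 0, and let x ∈ ℤ^N be such that ‖z − R·x‖² ≤ d². Then ⌈(z_N − d)/R_{N,N}⌉ ≤ x_N ≤ ⌊(z_N + d)/R_{N,N}⌋. -/
/-! Upper triangularity makes the last row of `R x` collapse to `R_{N,N} x_N`, so the last summand of
`‖z − R x‖²` is `(z_N − R_{N,N} x_N)²`. Being one of the summands it is at most `d²`, which puts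
`R_{N,N} x_N` in `[z_N − d, z_N + d]`; dividing by `R_{N,N} > 0` and using that `x_N` is an integer
gives the ceiling and floor bounds. -/

theorem Matrix.sum_mul_eq_diag_mul_of_forall_le {ι α : Type*} [Fintype ι] [LinearOrder ι]
    [NonUnitalNonAssocSemiring α] {R : Matrix ι ι α} (hR : ∀ i j, j < i → R i j = 0)
    {i : ι} (hi : ∀ j, j ≤ i) (v : ι → α) :
    ∑ j, R i j * v j = R i i * v i := by
  refine Finset.sum_eq_single i (fun j _ hji => ?_) (by simp)
  rw [hR i j (lt_of_le_of_ne (hi j) hji), zero_mul]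

theorem Int.ceil_div_le_and_le_floor_div_of_abs_sub_mul_le {α : Type*} [Field α] [LinearOrder α]
    [IsStrictOrderedRing α] [FloorRing α] {r z d : α} (hr : 0 < r) {k : ℤ}
    (hk : |z - r * k| ≤ d) : ⌈(z - d) / r⌉ ≤ k ∧ k ≤ ⌊(z + d) / r⌋ := by
  obtain ⟨hlo, hhi⟩ := abs_le.mp hk
  constructor
  · rw [Int.ceil_le, div_le_iff₀ hr]
    linarith
  · rw [Int.le_floor, le_div_iff₀ hr]
    linarith

/-- Sphere decoding bound on the last coordinate: if `R` is upper triangular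
with `R (N,N) > 0` and the integer vector `x` satisfies `‖z − R·x‖² ≤ d²`,
then `⌈(z_N − d)/R_{N,N}⌉ ≤ x_N ≤ ⌊(z_N + d)/R_{N,N}⌋`. -/
theorem sphere_decoding_last_coordinate_bounds (N : ℕ) (hN : 0 < N)
    (R : Matrix (Fin N) (Fin N) ℝ)
    (hR : ∀ i j : Fin N, j < i → R i j = 0)
    (hRNN : R ⟨N - 1, by omega⟩ ⟨N - 1, by omega⟩ > 0)
    (z : Fin N → ℝ) (d : ℝ) (hd : 0 ≤ d) (x : Fin N → ℤ)
    (hx : ∑ i, (z i - ∑ j, R i j * (x j : ℝ)) ^ 2 ≤ d ^ 2) :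
    ⌈(z ⟨N - 1, by omega⟩ - d) / R ⟨N - 1, by omega⟩ ⟨N - 1, by omega⟩⌉ ≤
        x ⟨N - 1, by omega⟩ ∧
      x ⟨N - 1, by omega⟩ ≤
        ⌊(z ⟨N - 1, by omega⟩ + d) / R ⟨N - 1, by omega⟩ ⟨N - 1, by omega⟩⌋ := by
  set n : Fin N := ⟨N - 1, by omega⟩
  have hn_greatest : ∀ j, j ≤ n := fun j => Fin.le_def.mpr (by simp only [n]; omega)
  have hrow : ∑ j, R n j * (x j : ℝ) = R n n * x n :=
    Matrix.sum_mul_eq_diag_mul_of_forall_le hR hn_greatest _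
  have hlast_sq : (z n - R n n * x n) ^ 2 ≤ d ^ 2 := by
    rw [← hrow]
    exact (Finset.single_le_sum (f := fun i => (z i - ∑ j, R i j * (x j : ℝ)) ^ 2)
      (fun i _ => sq_nonneg _) (Finset.mem_univ n)).trans hx
  exact Int.ceil_div_le_and_le_floor_div_of_abs_sub_mul_le hRNN
    (abs_le_of_sq_le_sq hlast_sq hd)
end
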